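/- arXiv:2102.04832 — 2 statements merged into one kernel-verified Lean document; each statement's English description precedes it below -/
import Mathlib

section
/- Let n ≥ 1 and ϖ ≥ 1 be integers and s ∈ ℝⁿ, and consider the AP-B sequence m_0 = |s| (componentwise absolute value), m_{i+1} = P_{≥|s|}(P_ϖ m_i). Then there exist m† ∈ S_{≥|s|} ∩ S_ϖ, a real γ > 0, and r with 0 < r < 1 such that ‖m_i − m†‖₂ ≤ γ·rⁱ for all i ≥ 0 and ‖m_{i+1} − m†‖₂ ≤ ‖m_i − m†‖₂ for all i ≥ 0; in particular the sequence (m_i) converges to m†. -/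
/-!
Both `P_ϖ` (an orthogonal projection, diagonal in the Fourier basis) and `P_{≥|s|}` (the metric
projection onto a convex set) are firmly nonexpansive towards their sets, so the iterates are Fejér
monotone with respect to `F = S_{≥|s|} ∩ S_ϖ`. The constant vector `‖s‖ + 1` lies in `S_ϖ` and has a
unit ball around it inside `S_{≥|s|}`; this gives linear regularity
`d(u, F) ≤ R · ‖u - P_{≥|s|} u‖` for `u ∈ S_ϖ` within distance `R` of it, and firm nonexpansiveness
of `P_{≥|s|}` then contracts `d(·, F)` by the factor `√(1 - 1/R²)` at every step. A Fejér
monotone sequence whose distance to a closed set decays geometrically converges geometrically to a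
point of that set.
-/

open scoped BigOperators

noncomputable section

/-- Low-frequency index set `K_ω ⊆ {0,…,n−1}`. -/
def Kset (n ω : ℕ) : Set (Fin n) := {k | (k : ℕ) ≤ ω - 1 ∨ n - ω + 1 ≤ (k : ℕ)}

/-- The set of ω-bandlimited real vectors `S_ω`. -/
def Sband (n ω : ℕ) : Set (EuclideanSpace ℝ (Fin n)) :=
  {x | ∀ k : Fin n, k ∉ Kset n ω →
    ∑ j : Fin n, (x j : ℂ) *
      Complex.exp (-(2 * (Real.pi : ℂ) * Complex.I * ((j : ℕ) : ℂ) * ((k : ℕ) : ℂ)) / (n : ℂ)) = 0}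

/-- The constraint set `S_{≥|s|}`. -/
def Sgeq (n : ℕ) (s : EuclideanSpace ℝ (Fin n)) : Set (EuclideanSpace ℝ (Fin n)) :=
  {x | ∀ j, |s j| ≤ x j}

/-- The metric projection onto `S_{≥|s|}`: componentwise `max(z_j, |s_j|)`. -/
def Pgeq (n : ℕ) (s z : EuclideanSpace ℝ (Fin n)) : EuclideanSpace ℝ (Fin n) :=
  (WithLp.equiv 2 (Fin n → ℝ)).symm (fun j => max (z j) |s j|)

/-- The rectangular low-pass filter `P_ϖ` (the orthogonal projection onto `S_ϖ`):
`(P_ϖ z)_j = (1/n)·Σ_{k∈K_ϖ} Σ_{l} z_l·cos(2πk(j−l)/n)`. -/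
def Pband (n ϖ : ℕ) (z : EuclideanSpace ℝ (Fin n)) : EuclideanSpace ℝ (Fin n) :=
  (WithLp.equiv 2 (Fin n → ℝ)).symm (fun j =>
    (1 / (n : ℝ)) *
      ∑ k ∈ Finset.univ.filter (fun k : Fin n => (k : ℕ) ≤ ϖ - 1 ∨ n - ϖ + 1 ≤ (k : ℕ)),
        ∑ l : Fin n, z l * Real.cos (2 * Real.pi * (k : ℕ) * (((j : ℕ) : ℝ) - ((l : ℕ) : ℝ)) / (n : ℝ)))


open Metric Filter Topology
open scoped RealInnerProductSpace

section InnerProductSpace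

variable {E : Type*} [NormedAddCommGroup E] [InnerProductSpace ℝ E]

lemma norm_sub_sq_add_norm_sub_sq_le_of_inner_nonpos {z p c : E} (h : ⟪z - p, c - p⟫ ≤ 0) :
    ‖p - c‖ ^ 2 + ‖z - p‖ ^ 2 ≤ ‖z - c‖ ^ 2 := by
  have hsplit := norm_sub_sq_real (z - p) (c - p)
  rw [sub_sub_sub_cancel_right, norm_sub_rev c p] at hsplit
  linarith

lemma norm_sub_le_of_inner_nonpos {z p c : E} (h : ⟪z - p, c - p⟫ ≤ 0) : ‖p - c‖ ≤ ‖z - c‖ :=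
  (sq_le_sq₀ (norm_nonneg _) (norm_nonneg _)).1 <| by
    nlinarith [norm_sub_sq_add_norm_sub_sq_le_of_inner_nonpos h, sq_nonneg ‖z - p‖]

/-- Linear regularity of `A ∩ B` when `B` contains a unit ball centred in `A`. The witness
`(u + d • z) / (1 + d)`, `d = ‖u - p‖`, is a convex combination of `p` and a point of that ball. -/
lemma infDist_inter_le_mul_norm_sub {A B : Set E} (hA : Convex ℝ A) (hB : Convex ℝ B) {z u p : E}
    (hzA : z ∈ A) (hball : closedBall z 1 ⊆ B) (huA : u ∈ A) (hpB : p ∈ B) :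
    infDist u (A ∩ B) ≤ ‖u - z‖ * ‖u - p‖ := by
  rcases eq_or_ne u p with rfl | hup
  · exact (infDist_zero_of_mem (s := A ∩ B) ⟨huA, hpB⟩).le.trans (by positivity)
  set d := ‖u - p‖
  have hd0 : 0 < d := norm_pos_iff.2 (sub_ne_zero.2 hup)
  have hd1 : 1 + d ≠ 0 := by positivity
  have hw : z + d⁻¹ • (u - p) ∈ B := hball <| by
    rw [mem_closedBall, dist_eq_norm, add_sub_cancel_left, norm_smul, norm_inv, norm_norm,
      inv_mul_cancel₀ hd0.ne']
  set y := (1 + d)⁻¹ • u + (d / (1 + d)) • z with hy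
  have hcoef : (1 + d)⁻¹ + d / (1 + d) = 1 := by field_simp
  have hyA : y ∈ A := hA huA hzA (by positivity) (by positivity) hcoef
  have hyB : y ∈ B := by
    convert hB hpB hw (by positivity) (by positivity) hcoef using 1
    rw [smul_add, smul_smul, show d / (1 + d) * d⁻¹ = (1 + d)⁻¹ by field_simp]
    module
  have huy : u - y = (d / (1 + d)) • (u - z) := by
    rw [hy, show (1 + d)⁻¹ = 1 - d / (1 + d) by field_simp; ring]
    module
  calc infDist u (A ∩ B) ≤ ‖u - y‖ := dist_eq_norm u y ▸ infDist_le_dist_of_mem ⟨hyA, hyB⟩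
    _ = d / (1 + d) * ‖u - z‖ := by rw [huy, norm_smul, Real.norm_of_nonneg (by positivity)]
    _ ≤ ‖u - z‖ * d := by
      rw [mul_comm]
      exact mul_le_mul_of_nonneg_left (div_le_self hd0.le (by linarith)) (norm_nonneg _)

end InnerProductSpace

lemma infDist_le_sqrt_mul_of_firm {X : Type*} [PseudoMetricSpace X] [ProperSpace X] {F : Set X}
    (hF : IsClosed F) (hne : F.Nonempty) {u q : X} {κ : ℝ} (hκ : 0 < κ)
    (hfirm : ∀ c ∈ F, dist q c ^ 2 + dist u q ^ 2 ≤ dist u c ^ 2)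
    (hreg : infDist u F ≤ κ * dist u q) :
    infDist q F ≤ √(1 - 1 / κ ^ 2) * infDist u F := by
  obtain ⟨c, hcF, hc⟩ := hF.exists_infDist_eq_dist hne u
  set δ := infDist u F
  have hδq : δ ^ 2 / κ ^ 2 ≤ dist u q ^ 2 := by
    rw [div_le_iff₀ (by positivity), ← mul_pow, mul_comm]
    exact pow_le_pow_left₀ infDist_nonneg hreg 2
  have hsq : dist q c ^ 2 ≤ (1 - 1 / κ ^ 2) * δ ^ 2 := by
    have := hfirm c hcF
    rw [← hc] at this
    linarith [show (1 - 1 / κ ^ 2) * δ ^ 2 = δ ^ 2 - δ ^ 2 / κ ^ 2 by ring]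
  calc infDist q F ≤ dist q c := infDist_le_dist_of_mem hcF
    _ = √(dist q c ^ 2) := (Real.sqrt_sq dist_nonneg).symm
    _ ≤ √((1 - 1 / κ ^ 2) * δ ^ 2) := Real.sqrt_le_sqrt hsq
    _ = √(1 - 1 / κ ^ 2) * δ := by rw [Real.sqrt_mul' _ (sq_nonneg _), Real.sqrt_sq infDist_nonneg]

/-- Fejér monotonicity bounds each step by twice the distance to `F`, so the sequence is Cauchy
with geometric rate. -/
theorem exists_tendsto_geometric_of_fejer {X : Type*} [PseudoMetricSpace X] [CompleteSpace X]
    {F : Set X} (hF : IsClosed F) (hne : F.Nonempty) {x : ℕ → X}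
    (hfejer : ∀ i, ∀ c ∈ F, dist (x (i + 1)) c ≤ dist (x i) c) {r : ℝ} (hr0 : 0 ≤ r) (hr1 : r < 1)
    (hcontr : ∀ i, infDist (x (i + 1)) F ≤ r * infDist (x i) F) :
    ∃ y ∈ F, ∃ γ > 0, (∀ i, dist (x i) y ≤ γ * r ^ i) ∧ Tendsto x atTop (𝓝 y) := by
  set D := infDist (x 0) F
  have hD : ∀ i, infDist (x i) F ≤ D * r ^ i := by
    intro i
    induction i with
    | zero => simp [D]
    | succ i ih => calc
        infDist (x (i + 1)) F ≤ r * infDist (x i) F := hcontr i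
        _ ≤ r * (D * r ^ i) := mul_le_mul_of_nonneg_left ih hr0
        _ = D * r ^ (i + 1) := by ring
  have hstep : ∀ i, dist (x i) (x (i + 1)) ≤ 2 * D * r ^ i := by
    intro i
    have : dist (x i) (x (i + 1)) / 2 ≤ infDist (x i) F :=
      (le_infDist hne).2 fun c hc => by
        linarith [dist_triangle_right (x i) (x (i + 1)) c, hfejer i c hc]
    linarith [hD i]
  obtain ⟨y, hy⟩ := cauchySeq_tendsto_of_complete (cauchySeq_of_le_geometric r _ hr1 hstep)
  have hyF : y ∈ F := by
    refine (hF.mem_iff_infDist_zero hne).2 (le_antisymm ?_ infDist_nonneg)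
    have hlim : Tendsto (fun i => D * r ^ i) atTop (𝓝 (D * 0)) :=
      (tendsto_pow_atTop_nhds_zero_of_lt_one hr0 hr1).const_mul D
    rw [mul_zero] at hlim
    exact le_of_tendsto_of_tendsto' ((continuous_infDist_pt F).tendsto y |>.comp hy) hlim hD
  have hγ : 0 < 2 * D / (1 - r) + 1 :=
    add_pos_of_nonneg_of_pos (div_nonneg (mul_nonneg zero_le_two infDist_nonneg) (by linarith))
      one_pos
  refine ⟨y, hyF, _, hγ, fun i => ?_, hy⟩
  calc dist (x i) y ≤ 2 * D * r ^ i / (1 - r) :=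
        dist_le_of_le_geometric_of_tendsto r _ hr1 hstep hy i
    _ ≤ (2 * D / (1 - r) + 1) * r ^ i := by
      rw [mul_div_right_comm, add_mul, one_mul]
      exact le_add_of_nonneg_right (pow_nonneg hr0 i)

lemma sqrt_one_sub_one_div_sq_mem_Ioo {R : ℝ} (hR : 1 < R) : √(1 - 1 / R ^ 2) ∈ Set.Ioo 0 1 := by
  have hR2 : 1 / R ^ 2 < 1 := (div_lt_one (by positivity)).2 (by nlinarith)
  have hR2' : 0 < 1 / R ^ 2 := by positivity
  exact ⟨Real.sqrt_pos.2 (by linarith), (Real.sqrt_lt' one_pos).2 (by linarith)⟩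

lemma Fin.dvd_sub_iff_eq {n : ℕ} (j l : Fin n) : (n : ℤ) ∣ (j : ℤ) - l ↔ j = l := by
  refine ⟨fun h => ?_, fun h => by simp [h]⟩
  have := Int.eq_zero_of_abs_lt_dvd h (abs_lt.2 ⟨by omega, by omega⟩)
  exact Fin.ext (by omega)

lemma Fin.dvd_neg_sub_neg {n : ℕ} (k : Fin n) : (n : ℤ) ∣ ((-k : Fin n) : ℤ) - -(k : ℤ) := by
  rw [Fin.val_neg']
  rcases (Nat.eq_zero_or_pos k).symm with hk | hk
  · rw [Nat.mod_eq_of_lt (by omega), Nat.cast_sub k.isLt.le]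
    simp
  · simp [hk]

def Kfin (n ω : ℕ) : Finset (Fin n) :=
  Finset.univ.filter (fun k : Fin n => (k : ℕ) ≤ ω - 1 ∨ n - ω + 1 ≤ (k : ℕ))

lemma mem_Kfin {n ω : ℕ} {k : Fin n} : k ∈ Kfin n ω ↔ k ∈ Kset n ω := by
  simp [Kfin, Kset]

lemma neg_mem_Kset_iff {n ω : ℕ} {k : Fin n} : -k ∈ Kset n ω ↔ k ∈ Kset n ω := by
  simp only [Kset, Set.mem_ofPred_eq, Fin.val_neg']
  rcases (Nat.eq_zero_or_pos k).symm with hk | hk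
  · rw [Nat.mod_eq_of_lt (by omega)]
    omega
  · simp [hk]

lemma zero_mem_Kset {n ω : ℕ} [NeZero n] : (0 : Fin n) ∈ Kset n ω := by
  simp [Kset]

section Fourier

variable {n : ℕ}

def unitRoot (n : ℕ) : ℂ := Complex.exp (2 * Real.pi * Complex.I / n)

lemma unitRoot_ne_zero : unitRoot n ≠ 0 := Complex.exp_ne_zero _

lemma exp_eq_unitRoot_zpow (t : ℤ) :
    Complex.exp (2 * Real.pi * Complex.I * t / n) = unitRoot n ^ t := by
  rw [unitRoot, ← Complex.exp_int_mul]
  ring_nf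

lemma ofReal_cos_eq_unitRoot (k j l : Fin n) :
    ((Real.cos (2 * Real.pi * (k : ℕ) * (((j : ℕ) : ℝ) - ((l : ℕ) : ℝ)) / (n : ℝ)) : ℝ) : ℂ) =
      (unitRoot n ^ ((k : ℤ) * (j - l)) + unitRoot n ^ (-((k : ℤ) * (j - l)))) / 2 := by
  rw [Complex.ofReal_cos, Complex.cos, ← exp_eq_unitRoot_zpow, ← exp_eq_unitRoot_zpow]
  push_cast
  ring_nf

def dft (x : EuclideanSpace ℝ (Fin n)) (k : ℤ) : ℂ :=
  ∑ j : Fin n, (x j : ℂ) * unitRoot n ^ (-((j : ℤ) * k))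

lemma dft_add (x y : EuclideanSpace ℝ (Fin n)) (k : ℤ) : dft (x + y) k = dft x k + dft y k := by
  simp [dft, add_mul, Finset.sum_add_distrib]

lemma dft_smul (a : ℝ) (x : EuclideanSpace ℝ (Fin n)) (k : ℤ) : dft (a • x) k = a * dft x k := by
  simp [dft, Finset.mul_sum, mul_assoc]

lemma mem_Sband_iff {ω : ℕ} {x : EuclideanSpace ℝ (Fin n)} :
    x ∈ Sband n ω ↔ ∀ k : Fin n, k ∉ Kset n ω → dft x k = 0 := by
  have hexp : ∀ j k : Fin n,
      Complex.exp (-(2 * (Real.pi : ℂ) * Complex.I * ((j : ℕ) : ℂ) * ((k : ℕ) : ℂ)) / (n : ℂ)) =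
        unitRoot n ^ (-((j : ℤ) * k)) := fun j k => by
    rw [← exp_eq_unitRoot_zpow]; push_cast; ring_nf
  simp only [Sband, Set.mem_ofPred_eq, dft, hexp]

variable [NeZero n]

lemma isPrimitiveRoot_unitRoot : IsPrimitiveRoot (unitRoot n) n :=
  Complex.isPrimitiveRoot_exp n (NeZero.ne n)

lemma unitRoot_zpow_eq_of_dvd {a b : ℤ} (h : (n : ℤ) ∣ a - b) :
    unitRoot n ^ a = unitRoot n ^ b := by
  rw [← sub_add_cancel a b, zpow_add₀ unitRoot_ne_zero,
    (isPrimitiveRoot_unitRoot.zpow_eq_one_iff_dvd _).2 h, one_mul]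

lemma sum_unitRoot_zpow_mul (t : ℤ) :
    ∑ j : Fin n, unitRoot n ^ ((j : ℤ) * t) = if (n : ℤ) ∣ t then (n : ℂ) else 0 := by
  have hζ := isPrimitiveRoot_unitRoot (n := n)
  have hpow : ∀ j : ℕ, unitRoot n ^ ((j : ℤ) * t) = (unitRoot n ^ t) ^ j := fun j => by
    rw [mul_comm, zpow_mul, zpow_natCast]
  simp only [hpow]
  rw [Fin.sum_univ_eq_sum_range (fun j => (unitRoot n ^ t) ^ j)]
  split_ifs with h
  · simp [(hζ.zpow_eq_one_iff_dvd t).2 h]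
  · rw [geom_sum_eq (mt (hζ.zpow_eq_one_iff_dvd t).1 h), ← zpow_natCast, ← zpow_mul, mul_comm,
      zpow_mul, zpow_natCast, hζ.pow_eq_one, one_zpow, sub_self, zero_div]

lemma dft_eq_of_dvd (x : EuclideanSpace ℝ (Fin n)) {a b : ℤ} (h : (n : ℤ) ∣ a - b) :
    dft x a = dft x b :=
  Finset.sum_congr rfl fun j _ => by
    rw [unitRoot_zpow_eq_of_dvd (a := -((j : ℤ) * a)) (by
      rw [show -((j : ℤ) * a) - -(j * b) = -(j * (a - b)) by ring]
      exact (h.mul_left _).neg_right)]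

lemma sum_unitRoot_zpow_mul_dft (x : EuclideanSpace ℝ (Fin n)) (j : Fin n) :
    ∑ k : Fin n, unitRoot n ^ ((k : ℤ) * j) * dft x k = n * x j := by
  have hterm : ∀ k l : Fin n,
      unitRoot n ^ ((k : ℤ) * j) * ((x l : ℂ) * unitRoot n ^ (-((l : ℤ) * k))) =
        x l * unitRoot n ^ ((k : ℤ) * (j - l)) := fun k l => by
    rw [mul_left_comm, ← zpow_add₀ unitRoot_ne_zero]; ring_nf
  simp only [dft, Finset.mul_sum, hterm]
  rw [Finset.sum_comm]
  simp only [← Finset.mul_sum, sum_unitRoot_zpow_mul, Fin.dvd_sub_iff_eq, mul_ite, mul_zero]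
  rw [Finset.sum_ite_eq]
  simp [mul_comm]

lemma eq_of_dft_eq {x y : EuclideanSpace ℝ (Fin n)} (h : ∀ k : Fin n, dft x k = dft y k) :
    x = y := by
  ext j
  have hj := sum_unitRoot_zpow_mul_dft x j
  simp only [h, sum_unitRoot_zpow_mul_dft y j] at hj
  exact_mod_cast (mul_right_injective₀ (Nat.cast_ne_zero.2 (NeZero.ne n))) hj.symm

lemma Pband_eq_sum_dft {ϖ : ℕ} (z : EuclideanSpace ℝ (Fin n)) (j : Fin n) :
    (Pband n ϖ z j : ℂ) = (n : ℂ)⁻¹ * ∑ k ∈ Kfin n ϖ, unitRoot n ^ ((k : ℤ) * j) * dft z k := by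
  have hcos : ∀ k : Fin n, ∑ l : Fin n, (z l : ℂ) *
      ((Real.cos (2 * Real.pi * (k : ℕ) * (((j : ℕ) : ℝ) - ((l : ℕ) : ℝ)) / (n : ℝ)) : ℝ) : ℂ) =
      (unitRoot n ^ ((k : ℤ) * j) * dft z k + unitRoot n ^ (-((k : ℤ) * j)) * dft z (-k)) / 2 := by
    intro k
    simp only [ofReal_cos_eq_unitRoot, dft, Finset.mul_sum, ← Finset.sum_add_distrib,
      Finset.sum_div]
    refine Finset.sum_congr rfl fun l _ => ?_
    simp only [mul_left_comm _ (z l : ℂ), ← zpow_add₀ unitRoot_ne_zero]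
    ring_nf
  -- `k ↦ -k` preserves `K_ϖ`, so the `e^{-iθ}` half of each cosine reproduces the `e^{iθ}` half.
  have hneg : ∑ k ∈ Kfin n ϖ, unitRoot n ^ (-((k : ℤ) * j)) * dft z (-k) =
      ∑ k ∈ Kfin n ϖ, unitRoot n ^ ((k : ℤ) * j) * dft z k := by
    refine Finset.sum_equiv (Equiv.neg (Fin n)) (fun k => by simp [mem_Kfin, neg_mem_Kset_iff])
      fun k _ => ?_
    have h := Fin.dvd_neg_sub_neg k
    rw [Equiv.neg_apply, dft_eq_of_dvd z h, ← neg_mul,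
      unitRoot_zpow_eq_of_dvd (a := ((-k : Fin n) : ℤ) * j)
        (by rw [← sub_mul]; exact h.mul_right _)]
  have hreal : (Pband n ϖ z j : ℂ) = (n : ℂ)⁻¹ * ∑ k ∈ Kfin n ϖ, ∑ l : Fin n, (z l : ℂ) *
      ((Real.cos (2 * Real.pi * (k : ℕ) * (((j : ℕ) : ℝ) - ((l : ℕ) : ℝ)) / (n : ℝ)) : ℝ) : ℂ) := by
    simp [Pband, Kfin]
  rw [hreal]
  simp only [hcos, ← Finset.sum_div, Finset.sum_add_distrib, hneg]
  ring

lemma dft_Pband {ϖ : ℕ} (z : EuclideanSpace ℝ (Fin n)) (k' : Fin n) :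
    dft (Pband n ϖ z) k' = if k' ∈ Kfin n ϖ then dft z k' else 0 := by
  have hterm : ∀ k j : Fin n,
      unitRoot n ^ ((k : ℤ) * j) * (dft z k * unitRoot n ^ (-((j : ℤ) * k'))) =
        dft z k * unitRoot n ^ ((j : ℤ) * (k - k')) := fun k j => by
    rw [mul_left_comm, ← zpow_add₀ unitRoot_ne_zero]; ring_nf
  rw [dft]
  simp only [Pband_eq_sum_dft, mul_assoc, ← Finset.mul_sum, Finset.sum_mul]
  rw [Finset.sum_comm]
  simp only [hterm, ← Finset.mul_sum, sum_unitRoot_zpow_mul, Fin.dvd_sub_iff_eq, mul_ite, mul_zero,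
    Finset.sum_ite_eq']
  rw [mul_left_comm, inv_mul_cancel₀ (Nat.cast_ne_zero.2 (NeZero.ne n)), mul_one]

lemma const_mem_Sband {ω : ℕ} (c : ℝ) : WithLp.toLp 2 (fun _ : Fin n => c) ∈ Sband n ω := by
  refine mem_Sband_iff.2 fun k hk => ?_
  have hk0 : ¬ (n : ℤ) ∣ -(k : ℤ) := by
    rw [dvd_neg, ← sub_zero (k : ℤ)]
    exact (Fin.dvd_sub_iff_eq k 0).not.2 (ne_of_mem_of_not_mem zero_mem_Kset hk).symm
  simp only [dft, neg_mul_eq_mul_neg]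
  rw [← Finset.mul_sum, sum_unitRoot_zpow_mul, if_neg hk0, mul_zero]

end Fourier

section Projections

variable {n ϖ : ℕ}

lemma real_inner_eq_sum_mul {ι : Type*} [Fintype ι] (x y : EuclideanSpace ℝ ι) :
    ⟪x, y⟫ = ∑ j, x j * y j := by
  simp [PiLp.inner_apply, mul_comm]

lemma inner_Pband_comm (z w : EuclideanSpace ℝ (Fin n)) :
    ⟪Pband n ϖ z, w⟫ = ⟪z, Pband n ϖ w⟫ := by
  simp only [real_inner_eq_sum_mul, Pband, WithLp.equiv_symm_apply, Finset.sum_mul, Finset.mul_sum]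
  rw [Finset.sum_comm]
  conv_rhs => rw [Finset.sum_comm]
  refine Finset.sum_congr rfl fun k _ => ?_
  conv_rhs => rw [Finset.sum_comm]
  refine Finset.sum_congr rfl fun j _ => Finset.sum_congr rfl fun l _ => ?_
  have hcos : Real.cos (2 * Real.pi * (k : ℕ) * (((l : ℕ) : ℝ) - ((j : ℕ) : ℝ)) / n) =
      Real.cos (2 * Real.pi * (k : ℕ) * (((j : ℕ) : ℝ) - ((l : ℕ) : ℝ)) / n) := by
    rw [← Real.cos_neg]; ring_nf
  rw [hcos]
  ring

def bandSubmodule (n ω : ℕ) : Submodule ℝ (EuclideanSpace ℝ (Fin n)) where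
  carrier := Sband n ω
  add_mem' hx hy := mem_Sband_iff.2 fun k hk => by
    rw [dft_add, mem_Sband_iff.1 hx k hk, mem_Sband_iff.1 hy k hk, add_zero]
  zero_mem' := mem_Sband_iff.2 fun k _ => by simp [dft]
  smul_mem' a x hx := mem_Sband_iff.2 fun k hk => by
    rw [dft_smul, mem_Sband_iff.1 hx k hk, mul_zero]

lemma convex_Sband {ω : ℕ} : Convex ℝ (Sband n ω) := (bandSubmodule n ω).convex

lemma isClosed_Sband {ω : ℕ} : IsClosed (Sband n ω) :=
  (bandSubmodule n ω).closed_of_finiteDimensional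

lemma convex_Sgeq (s : EuclideanSpace ℝ (Fin n)) : Convex ℝ (Sgeq n s) :=
  fun x hx y hy a b ha hb hab j => by
    simp only [PiLp.add_apply, PiLp.smul_apply, smul_eq_mul]
    calc |s j| = a * |s j| + b * |s j| := by rw [← add_mul, hab, one_mul]
      _ ≤ a * x j + b * y j :=
        add_le_add (mul_le_mul_of_nonneg_left (hx j) ha) (mul_le_mul_of_nonneg_left (hy j) hb)

lemma isClosed_Sgeq (s : EuclideanSpace ℝ (Fin n)) : IsClosed (Sgeq n s) := by
  simp only [Sgeq, Set.ofPred_forall]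
  exact isClosed_iInter fun j => isClosed_le continuous_const
    ((continuous_apply j).comp (PiLp.continuous_ofLp 2 _))

/-- A strictly feasible point: it lies in `S_ϖ`, and a unit ball around it lies in `S_{≥|s|}`. -/
def slaterPoint (s : EuclideanSpace ℝ (Fin n)) : EuclideanSpace ℝ (Fin n) :=
  WithLp.toLp 2 fun _ => ‖s‖ + 1

lemma closedBall_slaterPoint_subset_Sgeq (s : EuclideanSpace ℝ (Fin n)) :
    closedBall (slaterPoint s) 1 ⊆ Sgeq n s := fun x hx j => by
  have hs : |s j| ≤ ‖s‖ := PiLp.norm_apply_le s j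
  have hx : |x j - (‖s‖ + 1)| ≤ 1 :=
    (PiLp.norm_apply_le (x - slaterPoint s) j).trans (mem_closedBall_iff_norm.1 hx)
  linarith [(abs_le.1 hx).1]

lemma Pgeq_mem_Sgeq (s z : EuclideanSpace ℝ (Fin n)) : Pgeq n s z ∈ Sgeq n s :=
  fun _ => le_max_right _ _

lemma inner_sub_Pgeq_nonpos (s z : EuclideanSpace ℝ (Fin n)) {c : EuclideanSpace ℝ (Fin n)}
    (hc : c ∈ Sgeq n s) : ⟪z - Pgeq n s z, c - Pgeq n s z⟫ ≤ 0 := by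
  rw [real_inner_eq_sum_mul]
  refine Finset.sum_nonpos fun j _ => ?_
  simp only [PiLp.sub_apply, Pgeq, WithLp.equiv_symm_apply]
  rcases le_total |s j| (z j) with h | h
  · simp [max_eq_left h]
  · rw [max_eq_right h]
    exact mul_nonpos_of_nonpos_of_nonneg (by linarith) (by linarith [hc j])

variable [NeZero n]

lemma Pband_mem_Sband (z : EuclideanSpace ℝ (Fin n)) : Pband n ϖ z ∈ Sband n ϖ :=
  mem_Sband_iff.2 fun k hk => by rw [dft_Pband, if_neg (mt mem_Kfin.1 hk)]

lemma Pband_eq_self {d : EuclideanSpace ℝ (Fin n)} (hd : d ∈ Sband n ϖ) : Pband n ϖ d = d :=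
  eq_of_dft_eq fun k => by
    rw [dft_Pband]
    split_ifs with hk
    · rfl
    · exact (mem_Sband_iff.1 hd k (mt mem_Kfin.2 hk)).symm

lemma inner_sub_Pband_eq_zero (z : EuclideanSpace ℝ (Fin n)) {d : EuclideanSpace ℝ (Fin n)}
    (hd : d ∈ Sband n ϖ) : ⟪z - Pband n ϖ z, d⟫ = 0 := by
  rw [inner_sub_left, inner_Pband_comm, Pband_eq_self hd, sub_self]

lemma norm_Pband_sub_le (z : EuclideanSpace ℝ (Fin n)) {c : EuclideanSpace ℝ (Fin n)}
    (hc : c ∈ Sband n ϖ) : ‖Pband n ϖ z - c‖ ≤ ‖z - c‖ :=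
  norm_sub_le_of_inner_nonpos <| by
    rw [inner_sub_right, inner_sub_Pband_eq_zero z hc,
      inner_sub_Pband_eq_zero z (Pband_mem_Sband z), sub_zero]

end Projections

section Iteration

variable {n ϖ : ℕ} [NeZero n]

lemma slaterPoint_mem (s : EuclideanSpace ℝ (Fin n)) : slaterPoint s ∈ Sgeq n s ∩ Sband n ϖ :=
  ⟨closedBall_slaterPoint_subset_Sgeq s (mem_closedBall_self zero_le_one), const_mem_Sband _⟩

lemma norm_Pgeq_Pband_sub_le (s x : EuclideanSpace ℝ (Fin n)) {c : EuclideanSpace ℝ (Fin n)}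
    (hc : c ∈ Sgeq n s ∩ Sband n ϖ) : ‖Pgeq n s (Pband n ϖ x) - c‖ ≤ ‖x - c‖ :=
  (norm_sub_le_of_inner_nonpos (inner_sub_Pgeq_nonpos s _ hc.1)).trans (norm_Pband_sub_le x hc.2)

lemma infDist_Pgeq_Pband_le (s x : EuclideanSpace ℝ (Fin n)) {R : ℝ} (hR : 0 < R)
    (hx : dist x (slaterPoint s) ≤ R) :
    infDist (Pgeq n s (Pband n ϖ x)) (Sgeq n s ∩ Sband n ϖ) ≤
      √(1 - 1 / R ^ 2) * infDist x (Sgeq n s ∩ Sband n ϖ) := by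
  set F := Sgeq n s ∩ Sband n ϖ
  set u := Pband n ϖ x
  have hzF : slaterPoint s ∈ F := slaterPoint_mem s
  have hu : infDist u F ≤ infDist x F :=
    (le_infDist ⟨_, hzF⟩).2 fun c hc => (infDist_le_dist_of_mem hc).trans <| by
      simpa only [dist_eq_norm] using norm_Pband_sub_le x hc.2
  have hreg : infDist u F ≤ R * dist u (Pgeq n s u) := by
    rw [show F = Sband n ϖ ∩ Sgeq n s from Set.inter_comm _ _, dist_eq_norm]
    calc infDist u (Sband n ϖ ∩ Sgeq n s) ≤ ‖u - slaterPoint s‖ * ‖u - Pgeq n s u‖ :=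
          infDist_inter_le_mul_norm_sub convex_Sband (convex_Sgeq s) hzF.2
            (closedBall_slaterPoint_subset_Sgeq s) (Pband_mem_Sband x) (Pgeq_mem_Sgeq s u)
      _ ≤ R * ‖u - Pgeq n s u‖ := mul_le_mul_of_nonneg_right
          ((norm_Pband_sub_le x hzF.2).trans (dist_eq_norm x _ ▸ hx)) (norm_nonneg _)
  have hfirm : ∀ c ∈ F, dist (Pgeq n s u) c ^ 2 + dist u (Pgeq n s u) ^ 2 ≤ dist u c ^ 2 :=
    fun c hc => by
      simpa only [dist_eq_norm] using
        norm_sub_sq_add_norm_sub_sq_le_of_inner_nonpos (inner_sub_Pgeq_nonpos s u hc.1)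
  calc infDist (Pgeq n s u) F ≤ √(1 - 1 / R ^ 2) * infDist u F :=
        infDist_le_sqrt_mul_of_firm ((isClosed_Sgeq s).inter isClosed_Sband) ⟨_, hzF⟩ hR hfirm hreg
    _ ≤ √(1 - 1 / R ^ 2) * infDist x F := mul_le_mul_of_nonneg_left hu (Real.sqrt_nonneg _)

end Iteration

theorem APB_geometric_monotone_convergence_general
    (n ϖ : ℕ) (hn : 1 ≤ n) (s : EuclideanSpace ℝ (Fin n))
    (m : ℕ → EuclideanSpace ℝ (Fin n))
    (hms : ∀ i, m (i + 1) = Pgeq n s (Pband n ϖ (m i))) :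
    ∃ mdag ∈ Sgeq n s ∩ Sband n ϖ, ∃ γ : ℝ, 0 < γ ∧ ∃ r : ℝ, 0 < r ∧ r < 1 ∧
      (∀ i, ‖m i - mdag‖ ≤ γ * r ^ i) ∧
      (∀ i, ‖m (i + 1) - mdag‖ ≤ ‖m i - mdag‖) ∧
      Filter.Tendsto m Filter.atTop (nhds mdag) := by
  have : NeZero n := ⟨by omega⟩
  have hfejer : ∀ i, ∀ c ∈ Sgeq n s ∩ Sband n ϖ, dist (m (i + 1)) c ≤ dist (m i) c :=
    fun i c hc => by simpa only [hms, dist_eq_norm] using norm_Pgeq_Pband_sub_le s (m i) hc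
  set R := dist (m 0) (slaterPoint s) + 2
  have hR : 1 < R := by linarith [dist_nonneg (x := m 0) (y := slaterPoint s)]
  have hbound : ∀ i, dist (m i) (slaterPoint s) ≤ R := by
    intro i
    induction i with
    | zero => linarith
    | succ i ih => exact (hfejer i _ (slaterPoint_mem s)).trans ih
  obtain ⟨hr0, hr1⟩ := sqrt_one_sub_one_div_sq_mem_Ioo hR
  obtain ⟨mdag, hmem, γ, hγ, hgeo, hlim⟩ := exists_tendsto_geometric_of_fejer
    ((isClosed_Sgeq s).inter isClosed_Sband) ⟨_, slaterPoint_mem s⟩ hfejer hr0.le hr1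
    fun i => hms i ▸ infDist_Pgeq_Pband_le s (m i) (by linarith) (hbound i)
  refine ⟨mdag, hmem, γ, hγ, _, hr0, hr1, fun i => dist_eq_norm (m i) mdag ▸ hgeo i,
    fun i => ?_, hlim⟩
  simpa only [dist_eq_norm] using hfejer i mdag hmem

/-- the AP-B iteration `m_0 = |s|`, `m_{i+1} = P_{≥|s|}(P_ϖ m_i)` converges
geometrically and monotonically to some `m† ∈ S_{≥|s|} ∩ S_ϖ`. -/
theorem APB_geometric_monotone_convergence
    (n ϖ : ℕ) (hn : 1 ≤ n) (hϖ : 1 ≤ ϖ) (s : EuclideanSpace ℝ (Fin n))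
    (m : ℕ → EuclideanSpace ℝ (Fin n))
    (hm0 : ∀ j, m 0 j = |s j|)
    (hms : ∀ i, m (i + 1) = Pgeq n s (Pband n ϖ (m i))) :
    ∃ mdag ∈ Sgeq n s ∩ Sband n ϖ, ∃ γ : ℝ, 0 < γ ∧ ∃ r : ℝ, 0 < r ∧ r < 1 ∧
      (∀ i, ‖m i - mdag‖ ≤ γ * r ^ i) ∧
      (∀ i, ‖m (i + 1) - mdag‖ ≤ ‖m i - mdag‖) ∧
      Filter.Tendsto m Filter.atTop (nhds mdag) :=
  APB_geometric_monotone_convergence_general n ϖ hn s m hms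
end
end

section
/- Let n ≥ 1 and 1 ≤ ω ≤ ϖ be integers with 2ϖ−1 ≤ n, and let ν be a divisor of n with ν ≥ ϖ + ω − 1. Let m ∈ S_ω, and let z ∈ ℝⁿ whose DFT is supported on multiples of ν, i.e. Σ_{j=0}^{n−1} z_j·exp(−2πi·j·k/n) = 0 for every k ∈ {0,…,n−1} not divisible by ν. Then P_ϖ(m ∘ z) = ⟨z⟩·m, where m ∘ z is the componentwise product and ⟨z⟩ = (1/n)·Σ_{j=0}^{n−1} z_j. -/
open scoped BigOperators

noncomputable section

/-!
Expanding `z` in its Fourier series, `z = (1/n) Σ_{ν ∣ t} ẑ(t) e^{2πi t · /n}`, writes `m ∘ z` as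
`⟨z⟩ m` plus copies of `m` modulated by nonzero multiples `t` of `ν`. Since `ν ∣ n` and
`ν ≥ ϖ + ω - 1`, a modulated copy has its spectrum in `K_ω + t`, which misses `K_ϖ` modulo `n`,
so `P_ϖ` kills it, while `P_ϖ` fixes `m ∈ S_ω ⊆ S_ϖ`. On the Fourier side this is the convolution
formula `n · (x y)^(k) = Σ_t ŷ(t) x̂(k - t)`, which holds for the DFT attached to any primitive
`n`-th root of unity.
-/

open Finset

theorem Fin.natCast_dvd_intCast_val_sub_sub {n : ℕ} (a b : Fin n) :
    (n : ℤ) ∣ ((a - b : Fin n) : ℤ) - ((a : ℤ) - b) := by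
  rw [Fin.intCast_val_sub_eq_sub_add_ite]
  split_ifs <;> simp

namespace IsPrimitiveRoot

variable {K : Type*} [Field K] {n : ℕ} {ζ : K}

theorem zpow_eq_zpow_of_dvd_sub (hζ : IsPrimitiveRoot ζ n) (hζ0 : ζ ≠ 0) {a b : ℤ}
    (h : (n : ℤ) ∣ a - b) : ζ ^ a = ζ ^ b := by
  rw [← sub_add_cancel a b, zpow_add₀ hζ0, (hζ.zpow_eq_one_iff_dvd _).2 h, one_mul]

theorem sum_fin_zpow_mul (hζ : IsPrimitiveRoot ζ n) (t : ℤ) :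
    ∑ j : Fin n, ζ ^ ((j : ℤ) * t) = if (n : ℤ) ∣ t then (n : K) else 0 := by
  simp_rw [mul_comm _ t, zpow_mul, zpow_natCast]
  rw [Fin.sum_univ_eq_sum_range (fun j => (ζ ^ t) ^ j)]
  split_ifs with ht
  · simp [(hζ.zpow_eq_one_iff_dvd t).2 ht]
  · have hne : ζ ^ t - 1 ≠ 0 := sub_ne_zero.2 (mt (hζ.zpow_eq_one_iff_dvd t).1 ht)
    apply (mul_left_inj' hne).1
    rw [geom_sum_mul, ← zpow_natCast, ← zpow_mul, mul_comm, zpow_mul, hζ.zpow_eq_one, one_zpow,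
      sub_self, zero_mul]

end IsPrimitiveRoot

section FinDFT

variable {K : Type*} [Field K] {n : ℕ}

/-- For `ζ = exp (2πi / n)` this is the transform in `Sband`, see `finDFT_exp_eq`. -/
def finDFT (ζ : K) (x : Fin n → K) (k : Fin n) : K :=
  ∑ j, x j * ζ ^ (-((j : ℤ) * k))

variable {ζ : K}

theorem IsPrimitiveRoot.sum_zpow_mul_finDFT (hζ : IsPrimitiveRoot ζ n) (x : Fin n → K)
    (j : Fin n) : ∑ k : Fin n, ζ ^ ((k : ℤ) * j) * finDFT ζ x k = n * x j := by
  have hζ0 : ζ ≠ 0 := hζ.ne_zero j.pos.ne'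
  have hterm : ∀ l k : Fin n,
      ζ ^ ((k : ℤ) * j) * (x l * ζ ^ (-((l : ℤ) * k))) =
        x l * ζ ^ ((k : ℤ) * (j - l)) := by
    intro l k
    rw [show (k : ℤ) * (j - l) = k * j + -(l * k) by ring, zpow_add₀ hζ0]
    ring
  simp_rw [finDFT, mul_sum]
  rw [sum_comm]
  simp_rw [hterm, ← mul_sum, hζ.sum_fin_zpow_mul]
  rw [sum_eq_single j (fun l _ hlj => ?_) (by simp)]
  · simp [mul_comm]
  · rw [if_neg, mul_zero]
    intro hdvd
    have := Int.eq_zero_of_abs_lt_dvd hdvd (by rw [abs_lt]; omega)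
    exact hlj (Fin.ext (by omega))

theorem IsPrimitiveRoot.natCast_mul_finDFT_mul (hζ : IsPrimitiveRoot ζ n) (x y : Fin n → K)
    (k : Fin n) : n * finDFT ζ (x * y) k = ∑ t, finDFT ζ y t * finDFT ζ x (k - t) := by
  have hζ0 : ζ ≠ 0 := hζ.ne_zero k.pos.ne'
  have hshift : ∀ t l : Fin n,
      ζ ^ (-((l : ℤ) * (k - t : Fin n))) = ζ ^ ((t : ℤ) * l) * ζ ^ (-((l : ℤ) * k)) := by
    intro t l
    rw [← zpow_add₀ hζ0]
    refine hζ.zpow_eq_zpow_of_dvd_sub hζ0 ?_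
    rw [show -((l : ℤ) * (k - t : Fin n)) - (t * l + -(l * k))
        = -l * (((k - t : Fin n) : ℤ) - (k - t)) by ring]
    exact (Fin.natCast_dvd_intCast_val_sub_sub k t).mul_left _
  calc n * finDFT ζ (x * y) k
      = ∑ l, x l * (n * y l) * ζ ^ (-((l : ℤ) * k)) := by
        rw [finDFT, mul_sum]
        exact sum_congr rfl fun l _ => by simp only [Pi.mul_apply]; ring
    _ = ∑ l, ∑ t, finDFT ζ y t * (x l * ζ ^ (-((l : ℤ) * (k - t : Fin n)))) := by
        refine sum_congr rfl fun l _ => ?_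
        rw [← hζ.sum_zpow_mul_finDFT y l, mul_sum, sum_mul]
        exact sum_congr rfl fun t _ => by rw [hshift t l]; ring
    _ = ∑ t, finDFT ζ y t * finDFT ζ x (k - t) := by
        rw [sum_comm]
        simp_rw [finDFT, mul_sum]

theorem IsPrimitiveRoot.natCast_mul_finDFT_mul_of_forall [NeZero n] (hζ : IsPrimitiveRoot ζ n)
    {x y : Fin n → K} {k : Fin n}
    (h : ∀ t ≠ 0, finDFT ζ y t = 0 ∨ finDFT ζ x (k - t) = 0) :
    n * finDFT ζ (x * y) k = (∑ j, y j) * finDFT ζ x k := by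
  rw [hζ.natCast_mul_finDFT_mul, sum_eq_single 0 (fun t _ ht => ?_) (by simp)]
  · simp [finDFT]
  · rcases h t ht with h | h <;> simp [h]

theorem IsPrimitiveRoot.sum_zpow_mul_finDFT_of_mul_eq (hζ : IsPrimitiveRoot ζ n)
    {x y : Fin n → K} {F : Finset (Fin n)} {c : K} (hy : ∀ k ∉ F, finDFT ζ y k = 0)
    (hxy : ∀ k ∈ F, n * finDFT ζ x k = c * finDFT ζ y k) (j : Fin n) :
    ∑ k ∈ F, ζ ^ ((k : ℤ) * j) * finDFT ζ x k = c * y j := by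
  have : NeZero n := ⟨j.pos.ne'⟩
  apply mul_left_cancel₀ hζ.neZero'.out
  calc (n : K) * ∑ k ∈ F, ζ ^ ((k : ℤ) * j) * finDFT ζ x k
      = c * ∑ k ∈ F, ζ ^ ((k : ℤ) * j) * finDFT ζ y k := by
        simp_rw [mul_sum]
        exact sum_congr rfl fun k hk => by rw [mul_left_comm, hxy k hk]; ring
    _ = c * ∑ k : Fin n, ζ ^ ((k : ℤ) * j) * finDFT ζ y k := by
        rw [sum_subset (subset_univ F) fun k _ hk => by rw [hy k hk, mul_zero]]
    _ = n * (c * y j) := by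
        rw [hζ.sum_zpow_mul_finDFT]
        ring

end FinDFT

theorem Kset_mono {n ω ϖ : ℕ} (h : ω ≤ ϖ) : Kset n ω ⊆ Kset n ϖ := fun k hk => by
  simp only [Kset, Set.mem_ofPred_eq] at hk ⊢
  omega

/-- The frequency set `K_ϖ` as the finset over which `Pband` sums. -/
abbrev KFinset (n ϖ : ℕ) : Finset (Fin n) :=
  univ.filter fun k : Fin n => (k : ℕ) ≤ ϖ - 1 ∨ n - ϖ + 1 ≤ (k : ℕ)

theorem mem_KFinset {n ϖ : ℕ} {k : Fin n} : k ∈ KFinset n ϖ ↔ k ∈ Kset n ϖ := by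
  simp [Kset]

theorem sub_notMem_Kset {n ω ϖ ν : ℕ} (hω : 1 ≤ ω) (hϖ : 1 ≤ ϖ) (hν : ν ∣ n)
    (hνge : ϖ + ω - 1 ≤ ν) {k t : Fin n} (hk : k ∈ Kset n ϖ) (ht : ν ∣ (t : ℕ))
    (ht0 : (t : ℕ) ≠ 0) : k - t ∉ Kset n ω := by
  have hνt : ν ≤ t := Nat.le_of_dvd (Nat.pos_of_ne_zero ht0) ht
  -- both `t` and `n - t` are nonzero multiples of `ν`, so the shift moves `K_ϖ` into `[ω, n - ω]`
  have hνnt : ν ≤ n - t := Nat.le_of_dvd (by omega) (Nat.dvd_sub hν ht)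
  simp only [Kset, Set.mem_ofPred_eq] at hk ⊢
  rcases le_or_gt t k with h | h
  · rw [Fin.coe_sub_iff_le.2 h]
    omega
  · rw [Fin.coe_sub_iff_lt.2 h]
    omega

section Circle

open Complex Real

theorem finDFT_exp_eq (n : ℕ) (x : Fin n → ℝ) (k : Fin n) :
    finDFT (exp (2 * π * I / n)) (fun j => (x j : ℂ)) k = ∑ j : Fin n, (x j : ℂ) *
      exp (-(2 * (π : ℂ) * I * ((j : ℕ) : ℂ) * ((k : ℕ) : ℂ)) / (n : ℂ)) := by
  refine sum_congr rfl fun j _ => ?_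
  rw [← exp_int_mul]
  congr 2
  push_cast
  ring

theorem re_exp_zpow (n : ℕ) (a : ℤ) :
    (exp (2 * π * I / n) ^ a).re = Real.cos (2 * π * a / n) := by
  rw [← exp_int_mul, show (a : ℂ) * (2 * π * I / n) = ((2 * π * a / n : ℝ) : ℂ) * I by
    push_cast; ring, exp_ofReal_mul_I_re]

theorem Pband_apply (n ϖ : ℕ) (x : EuclideanSpace ℝ (Fin n)) (j : Fin n) :
    Pband n ϖ x j = 1 / n * (∑ k ∈ KFinset n ϖ, exp (2 * π * I / n) ^ ((k : ℤ) * j) *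
      finDFT (exp (2 * π * I / n)) (fun l => (x l : ℂ)) k).re := by
  show 1 / (n : ℝ) * ∑ k ∈ KFinset n ϖ, ∑ l : Fin n,
    x l * Real.cos (2 * π * (k : ℕ) * (((j : ℕ) : ℝ) - ((l : ℕ) : ℝ)) / n) = _
  rw [re_sum]
  refine congrArg _ (sum_congr rfl fun k _ => ?_)
  rw [finDFT, mul_sum, re_sum]
  refine sum_congr rfl fun l _ => ?_
  rw [mul_left_comm, ← zpow_add₀ (Complex.exp_ne_zero _), re_ofReal_mul, re_exp_zpow]
  push_cast
  ring_nf

end Circle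

theorem Pband_of_bandlimited_mul_periodic_general
    (n ω ϖ ν : ℕ) (hω : 1 ≤ ω) (hωϖ : ω ≤ ϖ)
    (hν : ν ∣ n) (hνge : ϖ + ω - 1 ≤ ν)
    (m : EuclideanSpace ℝ (Fin n)) (hm : m ∈ Sband n ω)
    (z : EuclideanSpace ℝ (Fin n))
    (hzdft : ∀ k : Fin n, ¬ (ν ∣ (k : ℕ)) →
      ∑ j : Fin n, (z j : ℂ) *
        Complex.exp (-(2 * (Real.pi : ℂ) * Complex.I * ((j : ℕ) : ℂ) * ((k : ℕ) : ℂ)) / (n : ℂ)) = 0) :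
    Pband n ϖ ((WithLp.equiv 2 (Fin n → ℝ)).symm (fun j => m j * z j)) =
      ((1 / (n : ℝ)) * ∑ j : Fin n, z j) • m := by
  ext j
  have : NeZero n := ⟨j.pos.ne'⟩
  set ζ := Complex.exp (2 * Real.pi * Complex.I / n)
  have hζ : IsPrimitiveRoot ζ n := Complex.isPrimitiveRoot_exp n (NeZero.ne n)
  set M : Fin n → ℂ := fun l => m l
  set Z : Fin n → ℂ := fun l => z l
  have hM : ∀ k ∉ Kset n ω, finDFT ζ M k = 0 := fun k hk =>
    (finDFT_exp_eq n m k).trans (hm k hk)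
  have hMZ : ∀ k ∈ KFinset n ϖ, n * finDFT ζ (M * Z) k = (∑ l, Z l) * finDFT ζ M k := by
    intro k hk
    refine hζ.natCast_mul_finDFT_mul_of_forall fun t ht => ?_
    by_cases hνt : ν ∣ (t : ℕ)
    · exact Or.inr (hM _ (sub_notMem_Kset hω (hω.trans hωϖ) hν hνge (mem_KFinset.1 hk) hνt
        (Fin.val_ne_zero_iff.2 ht)))
    · exact Or.inl ((finDFT_exp_eq n z t).trans (hzdft t hνt))
  have hrec := hζ.sum_zpow_mul_finDFT_of_mul_eq
    (fun k hk => hM k fun h => hk (mem_KFinset.2 (Kset_mono hωϖ h))) hMZ j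
  have hprod : (fun l => (((WithLp.equiv 2 (Fin n → ℝ)).symm (fun j => m j * z j) l : ℝ) : ℂ)) =
      M * Z := by
    ext l
    simp [M, Z]
  rw [Pband_apply, hprod, hrec]
  simp only [M, Z, one_div, ← Complex.ofReal_sum, Complex.mul_re, Complex.ofReal_re,
    Complex.ofReal_im, mul_zero, sub_zero, PiLp.smul_apply, smul_eq_mul]
  ring

/-- lowpass filtering of a bandlimited vector multiplied componentwise by a
vector whose DFT is supported on multiples of `ν` returns the bandlimited vector scaled
by the mean of the other factor. -/
theorem Pband_of_bandlimited_mul_periodic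
    (n ω ϖ ν : ℕ) (hn : 1 ≤ n) (hω : 1 ≤ ω) (hωϖ : ω ≤ ϖ) (h2ϖ : 2 * ϖ - 1 ≤ n)
    (hν : ν ∣ n) (hνge : ϖ + ω - 1 ≤ ν)
    (m : EuclideanSpace ℝ (Fin n)) (hm : m ∈ Sband n ω)
    (z : EuclideanSpace ℝ (Fin n))
    (hzdft : ∀ k : Fin n, ¬ (ν ∣ (k : ℕ)) →
      ∑ j : Fin n, (z j : ℂ) *
        Complex.exp (-(2 * (Real.pi : ℂ) * Complex.I * ((j : ℕ) : ℂ) * ((k : ℕ) : ℂ)) / (n : ℂ)) = 0) :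
    Pband n ϖ ((WithLp.equiv 2 (Fin n → ℝ)).symm (fun j => m j * z j)) =
      ((1 / (n : ℝ)) * ∑ j : Fin n, z j) • m :=
  Pband_of_bandlimited_mul_periodic_general n ω ϖ ν hω hωϖ hν hνge m hm z hzdft
end
end
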